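/- arXiv:1606.07753 — 7 statements merged into one kernel-verified Lean document; each statement's English description precedes it below -/
import Mathlib

section
/- For every natural number n ≥ 1, the number of pairs (x,y) of integers with x² + y² = n equals 4(d₁,₄(n) − d₃,₄(n)), where d_{j,4}(n) denotes the number of positive divisors d of n with d ≡ j (mod 4). -/
/-!
Identify pairs `(x, y)` with Gaussian integers `x + y i` and let `S₂ n` count those of norm `n`.
For a prime `p ∤ c` one shows `S₂ (p ^ k * c) = (1 + χ₄ p + ⋯ + χ₄ p ^ k) * S₂ c`.
For `p = 2` and `p ≡ 3 (mod 4)` the prime `π = 1 + i`, resp. `π = p`, divides its conjugate, so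
every element whose norm is a multiple of `N π` is a multiple of `π`; hence
`S₂ (N π * c) = S₂ c`, and `S₂ (p * c) = 0` when `p ≡ 3` and `p ∤ c`.
For `p ≡ 1 (mod 4)` write `p = π π̄` with `π`, `π̄` non-associated primes: an element of norm
`p * c` is a multiple of `π` or of `π̄`, and of both iff it is a multiple of `p`, so
inclusion–exclusion gives `S₂ (p ^ 2 * c) + S₂ c = 2 * S₂ (p * c)`.
The multiplicative function `∑_{d ∣ n} χ₄ d` has the same local factors, and `S₂ 1 = 4`.
-/

open ArithmeticFunction Finset ZMod
open scoped ArithmeticFunction.zeta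

local notation "ℤ[i]" => GaussianInt

/-- `d₁,₄ - d₃,₄`, as the Dirichlet convolution `1 * χ₄`. -/
noncomputable def χ₄DivisorSum : ArithmeticFunction ℤ := ↑ζ * toArithmeticFunction (χ₄ ·)

lemma χ₄DivisorSum_apply (n : ℕ) : χ₄DivisorSum n = ∑ d ∈ n.divisors, χ₄ d := by
  rw [χ₄DivisorSum, coe_zeta_mul_apply]
  exact sum_congr rfl fun d hd => if_neg (Nat.pos_of_mem_divisors hd).ne'

lemma isMultiplicative_χ₄DivisorSum : χ₄DivisorSum.IsMultiplicative :=
  isMultiplicative_zeta.natCast.mul (DirichletCharacter.isMultiplicative_toArithmeticFunction χ₄)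

lemma χ₄DivisorSum_prime_pow {p : ℕ} (hp : p.Prime) (k : ℕ) :
    χ₄DivisorSum (p ^ k) = ∑ i ∈ range (k + 1), χ₄ p ^ i := by
  simp only [χ₄DivisorSum_apply, Nat.sum_divisors_prime_pow hp, Nat.cast_pow, map_pow]

lemma χ₄DivisorSum_eq_card_sub_card (n : ℕ) :
    χ₄DivisorSum n = (#{d ∈ n.divisors | d % 4 = 1} : ℤ) - #{d ∈ n.divisors | d % 4 = 3} := by
  rw [χ₄DivisorSum_apply, ← sum_boole, ← sum_boole, ← sum_sub_distrib]
  refine sum_congr rfl fun d _ => ?_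
  rw [χ₄_nat_eq_if_mod_four]
  split_ifs <;> omega

namespace GaussianInt

lemma star_dvd_of_dvd_star {a b : ℤ[i]} (h : a ∣ star b) : star a ∣ b := by
  simpa only [starRingEnd_apply, star_star] using map_dvd (starRingEnd ℤ[i]) h

lemma norm_dvd_norm {a b : ℤ[i]} (h : a ∣ b) : a.norm ∣ b.norm :=
  map_dvd Zsqrtd.normMonoidHom h

lemma dvd_norm_mul (π : ℤ[i]) (c : ℤ) : π ∣ ((π.norm * c : ℤ) : ℤ[i]) :=
  ⟨star π * c, by rw [Int.cast_mul, Zsqrtd.norm_eq_mul_conj, mul_assoc]⟩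

lemma dvd_or_star_dvd_of_dvd_norm {π z : ℤ[i]} (hπ : Prime π) (h : π ∣ (z.norm : ℤ[i])) :
    π ∣ z ∨ star π ∣ z := by
  rw [Zsqrtd.norm_eq_mul_conj] at h
  exact (hπ.dvd_or_dvd h).imp_right star_dvd_of_dvd_star

lemma dvd_and_star_dvd_iff {π z : ℤ[i]} (hπ : Prime π) (hπ' : ¬ π ∣ star π) :
    π ∣ z ∧ star π ∣ z ↔ (π.norm : ℤ[i]) ∣ z := by
  rw [Zsqrtd.norm_eq_mul_conj]
  refine ⟨fun ⟨⟨a, ha⟩, hσ⟩ => ?_,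
    fun h => ⟨(dvd_mul_right _ _).trans h, (dvd_mul_left _ _).trans h⟩⟩
  subst ha
  have : π ∣ star π * star a := by
    simpa only [map_mul, starRingEnd_apply, star_star] using map_dvd (starRingEnd ℤ[i]) hσ
  exact mul_dvd_mul_left π (star_dvd_of_dvd_star ((hπ.dvd_or_dvd this).resolve_left hπ'))

lemma irreducible_of_norm_eq_prime {π : ℤ[i]} {p : ℕ} (hp : p.Prime) (hπ : π.norm = p) :
    Irreducible π := by
  have hp' : Irreducible (p : ℤ) := (Nat.prime_iff_prime_int.mp hp).irreducible
  refine ⟨fun hu => hp'.not_isUnit ?_, fun a b hab => ?_⟩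
  · rwa [← hπ, Int.isUnit_iff_natAbs_eq, Zsqrtd.norm_eq_one_iff]
  · exact (hp'.isUnit_or_isUnit (by rw [← hπ, hab, Zsqrtd.norm_mul])).imp
      (fun ha => Zsqrtd.norm_eq_one_iff.mp (Int.isUnit_iff_natAbs_eq.mp ha))
      (fun hb => Zsqrtd.norm_eq_one_iff.mp (Int.isUnit_iff_natAbs_eq.mp hb))

lemma not_dvd_star_of_norm_eq_prime {π : ℤ[i]} {p : ℕ} (hp : p.Prime) (hp2 : p ≠ 2)
    (hπ : π.norm = p) : ¬ π ∣ star π := by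
  intro h
  have hp' : Prime (p : ℤ) := Nat.prime_iff_prime_int.mp hp
  -- `π ∣ π + π̄ = 2 re π`, so `p ∣ (2 re π) ^ 2`, and then `p` divides both coordinates of `π`
  have h2re : π ∣ ((2 * π.re : ℤ) : ℤ[i]) := by
    have : π + star π = ((2 * π.re : ℤ) : ℤ[i]) := by ext <;> simp [two_mul]
    exact this ▸ dvd_add dvd_rfl h
  have hre : (p : ℤ) ∣ π.re := by
    have h2 : (p : ℤ) ∣ 2 * π.re := hp'.dvd_of_dvd_pow (n := 2) <| by
      simpa only [hπ, Zsqrtd.norm_intCast, sq] using norm_dvd_norm h2re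
    refine (hp'.dvd_or_dvd h2).resolve_left fun h => hp2 ?_
    exact (Nat.prime_dvd_prime_iff_eq hp Nat.prime_two).mp (by exact_mod_cast h)
  have hnorm : π.re * π.re + π.im * π.im = p := by rw [← hπ, Zsqrtd.norm_def]; ring
  have him : (p : ℤ) ∣ π.im := hp'.dvd_of_dvd_pow (n := 2) <| by
    rw [sq, ← dvd_add_right (hre.mul_right π.re)]
    exact hnorm ▸ dvd_refl (p : ℤ)
  have hpp : (p : ℤ) * p ∣ π.re * π.re + π.im * π.im :=
    dvd_add (mul_dvd_mul hre hre) (mul_dvd_mul him him)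
  rw [hnorm] at hpp
  exact hp'.not_dvd_one ((mul_dvd_mul_iff_left hp'.ne_zero).mp (by rwa [mul_one]))

/-- The number of pairs `(x, y)` with `x ^ 2 + y ^ 2 = n`, counted as Gaussian integers. -/
noncomputable def S₂ (n : ℤ) : ℕ := {z : ℤ[i] | z.norm = n}.ncard

lemma setOf_sq_add_sq_eq_filter (n : ℤ) : {p : ℤ × ℤ | p.1 ^ 2 + p.2 ^ 2 = n} =
    ↑((Icc (-n) n ×ˢ Icc (-n) n).filter fun p : ℤ × ℤ => p.1 ^ 2 + p.2 ^ 2 = n) := by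
  ext ⟨x, y⟩
  simp only [Set.mem_ofPred_eq, coe_filter, mem_product, mem_Icc]
  refine ⟨fun h => ⟨⟨⟨?_, ?_⟩, ?_, ?_⟩, h⟩, fun h => h.2⟩ <;>
    nlinarith [Int.le_self_sq x, Int.le_self_sq (-x), Int.le_self_sq y, Int.le_self_sq (-y),
      sq_nonneg x, sq_nonneg y]

lemma setOf_sq_add_sq_eq_preimage (n : ℤ) : {p : ℤ × ℤ | p.1 ^ 2 + p.2 ^ 2 = n} =
    (fun p : ℤ × ℤ => (⟨p.1, p.2⟩ : ℤ[i])) ⁻¹' {z | z.norm = n} := by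
  ext
  simp [Zsqrtd.norm_def, sq]

lemma mk_surjective : Function.Surjective fun p : ℤ × ℤ => (⟨p.1, p.2⟩ : ℤ[i]) :=
  fun z => ⟨(z.re, z.im), rfl⟩

lemma ncard_setOf_sq_add_sq_eq (n : ℤ) : {p : ℤ × ℤ | p.1 ^ 2 + p.2 ^ 2 = n}.ncard = S₂ n := by
  rw [setOf_sq_add_sq_eq_preimage, S₂]
  exact Set.ncard_preimage_of_injective_subset_range
    (fun p q h => by simpa only [Zsqrtd.mk.injEq, ← Prod.ext_iff] using h)
    (mk_surjective.range_eq ▸ Set.subset_univ _)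

lemma finite_setOf_norm_eq (n : ℤ) : {z : ℤ[i] | z.norm = n}.Finite := by
  refine Set.Finite.of_preimage ?_ mk_surjective
  rw [← setOf_sq_add_sq_eq_preimage, setOf_sq_add_sq_eq_filter]
  exact Finset.finite_toSet _

lemma S₂_one : S₂ 1 = 4 := by
  rw [← ncard_setOf_sq_add_sq_eq, setOf_sq_add_sq_eq_filter, Set.ncard_coe_finset]
  decide

lemma setOf_norm_eq_and_dvd (π : ℤ[i]) (n : ℤ) :
    {z : ℤ[i] | z.norm = n ∧ π ∣ z} = (π * ·) '' {w | π.norm * w.norm = n} := by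
  ext z
  constructor
  · rintro ⟨hz, w, rfl⟩
    exact ⟨w, show π.norm * w.norm = n by rwa [← Zsqrtd.norm_mul], rfl⟩
  · rintro ⟨w, hw, rfl⟩
    exact ⟨by rwa [Zsqrtd.norm_mul], dvd_mul_right π w⟩

lemma ncard_setOf_norm_eq_and_dvd {π : ℤ[i]} (hπ : π ≠ 0) (n : ℤ) :
    {z : ℤ[i] | z.norm = n ∧ π ∣ z}.ncard = {w : ℤ[i] | π.norm * w.norm = n}.ncard := by
  rw [setOf_norm_eq_and_dvd, Set.ncard_image_of_injective _ (mul_right_injective₀ hπ)]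

lemma setOf_mul_norm_eq_eq_empty {a c : ℤ} (hc : ¬ a ∣ c) :
    {w : ℤ[i] | a * w.norm = c} = ∅ :=
  Set.eq_empty_of_forall_notMem fun w hw => hc ⟨w.norm, hw.symm⟩

lemma setOf_norm_eq_eq_and_dvd {π : ℤ[i]} (hπ : Prime π) (hπ' : π ∣ star π) {n : ℤ}
    (hn : π ∣ (n : ℤ[i])) : {z : ℤ[i] | z.norm = n} = {z | z.norm = n ∧ π ∣ z} := by
  ext z
  refine ⟨fun hz => ⟨hz, ?_⟩, And.left⟩
  exact (dvd_or_star_dvd_of_dvd_norm hπ (hz ▸ hn : π ∣ (z.norm : ℤ[i]))).elim id hπ'.trans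

lemma S₂_norm_mul_of_dvd_star {π : ℤ[i]} (hπ : Prime π) (hπ' : π ∣ star π) (c : ℤ) :
    S₂ (π.norm * c) = S₂ c := by
  have hπ0 : π.norm ≠ 0 := GaussianInt.norm_eq_zero.not.mpr hπ.ne_zero
  rw [S₂, setOf_norm_eq_eq_and_dvd hπ hπ' (dvd_norm_mul π c),
    ncard_setOf_norm_eq_and_dvd hπ.ne_zero, S₂]
  simp only [mul_right_inj' hπ0]

lemma S₂_norm_mul_add {π : ℤ[i]} (hπ : Prime π) (hπ' : ¬ π ∣ star π) (c : ℤ) :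
    S₂ (π.norm * c) + {w : ℤ[i] | π.norm * w.norm = c}.ncard = 2 * S₂ c := by
  have hπ0 : π.norm ≠ 0 := GaussianInt.norm_eq_zero.not.mpr hπ.ne_zero
  set n := π.norm * c
  set A := {z : ℤ[i] | z.norm = n ∧ π ∣ z}
  set B := {z : ℤ[i] | z.norm = n ∧ star π ∣ z}
  have hunion : A ∪ B = {z | z.norm = n} := by
    ext z
    refine ⟨fun h => h.elim And.left And.left, fun hz => ?_⟩
    exact (dvd_or_star_dvd_of_dvd_norm hπ (hz ▸ dvd_norm_mul π c : π ∣ (z.norm : ℤ[i]))).imp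
      (⟨hz, ·⟩) (⟨hz, ·⟩)
  have hinter : A ∩ B = {z | z.norm = n ∧ ((π.norm : ℤ) : ℤ[i]) ∣ z} :=
    Set.ext fun _ => and_and_left.symm.trans (and_congr_right' (dvd_and_star_dvd_iff hπ hπ'))
  have hA : A.ncard = S₂ c := by
    rw [ncard_setOf_norm_eq_and_dvd hπ.ne_zero, S₂]
    simp only [n, mul_right_inj' hπ0]
  have hB : B.ncard = S₂ c := by
    rw [ncard_setOf_norm_eq_and_dvd (star_ne_zero.mpr hπ.ne_zero), Zsqrtd.norm_conj, S₂]
    simp only [n, mul_right_inj' hπ0]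
  have hAB : (A ∩ B).ncard = {w : ℤ[i] | π.norm * w.norm = c}.ncard := by
    rw [hinter, ncard_setOf_norm_eq_and_dvd (by exact_mod_cast hπ0), Zsqrtd.norm_intCast]
    simp only [n, mul_assoc, mul_right_inj' hπ0]
  have hfin := finite_setOf_norm_eq n
  have := Set.ncard_union_add_ncard_inter A B (hfin.subset fun _ => And.left)
    (hfin.subset fun _ => And.left)
  rwa [hunion, hA, hB, hAB, ← two_mul] at this

lemma S₂_two_pow_mul (c : ℤ) (k : ℕ) : S₂ (2 ^ k * c) = S₂ c := by
  have h2 : (⟨1, 1⟩ : ℤ[i]).norm = (2 : ℕ) := by decide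
  have hπ := (irreducible_of_norm_eq_prime Nat.prime_two h2).prime
  induction k with
  | zero => simp
  | succ k ih =>
    rw [show (2 : ℤ) ^ (k + 1) * c = (⟨1, 1⟩ : ℤ[i]).norm * (2 ^ k * c) by rw [h2]; ring,
      S₂_norm_mul_of_dvd_star hπ ⟨⟨0, -1⟩, by decide⟩, ih]

section SplitPrime

variable {p : ℕ} (hp : p.Prime) (hp1 : p % 4 = 1)
include hp hp1

lemma exists_prime_norm_eq_not_dvd_star :
    ∃ π : ℤ[i], π.norm = p ∧ Prime π ∧ ¬ π ∣ star π := by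
  have : Fact p.Prime := ⟨hp⟩
  obtain ⟨a, b, hab⟩ := Nat.Prime.sq_add_sq (p := p) (by omega)
  have hπ : (⟨a, b⟩ : ℤ[i]).norm = p := by rw [Zsqrtd.norm_def, ← hab]; push_cast; ring
  exact ⟨_, hπ, (irreducible_of_norm_eq_prime hp hπ).prime,
    not_dvd_star_of_norm_eq_prime hp (by omega) hπ⟩

lemma S₂_pow_mul_of_mod_four_eq_one {c : ℤ} (hc : ¬ (p : ℤ) ∣ c) (k : ℕ) :
    S₂ (p ^ k * c) = (k + 1) * S₂ c := by
  obtain ⟨π, hπp, hπ, hπ'⟩ := exists_prime_norm_eq_not_dvd_star hp hp1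
  have hp0 : (p : ℤ) ≠ 0 := by exact_mod_cast hp.ne_zero
  have hstep : ∀ c : ℤ, S₂ (p * (p * c)) + S₂ c = 2 * S₂ (p * c) := fun c => by
    have := S₂_norm_mul_add hπ hπ' (p * c)
    simp only [hπp, mul_right_inj' hp0] at this
    exact this
  induction k using Nat.twoStepInduction with
  | zero => simp
  | one =>
    have := S₂_norm_mul_add hπ hπ' c
    rwa [hπp, setOf_mul_norm_eq_eq_empty hc, Set.ncard_empty, add_zero, ← pow_one (p : ℤ)] at this
  | more k ih₀ ih₁ =>
    have := hstep (p ^ k * c)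
    rw [show (p : ℤ) ^ (k + 1) * c = p * (p ^ k * c) by ring] at ih₁
    rw [show (p : ℤ) ^ (k + 2) * c = p * (p * (p ^ k * c)) by ring]
    linarith

end SplitPrime

section InertPrime

variable {p : ℕ} (hp : p.Prime) (hp3 : p % 4 = 3)
include hp hp3

lemma S₂_pow_two_mul_mul_of_mod_four_eq_three (c : ℤ) (k : ℕ) :
    S₂ (p ^ (2 * k) * c) = S₂ c := by
  have : Fact p.Prime := ⟨hp⟩
  induction k with
  | zero => simp
  | succ k ih =>
    rw [show (p : ℤ) ^ (2 * (k + 1)) * c = (p : ℤ[i]).norm * (p ^ (2 * k) * c) by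
        rw [Zsqrtd.norm_natCast]; ring,
      S₂_norm_mul_of_dvd_star (prime_of_nat_prime_of_mod_four_eq_three p hp3)
        (by rw [star_natCast]), ih]

lemma S₂_mul_eq_zero_of_mod_four_eq_three {c : ℤ} (hc : ¬ (p : ℤ) ∣ c) : S₂ (p * c) = 0 := by
  have : Fact p.Prime := ⟨hp⟩
  have hp0 : (p : ℤ) ≠ 0 := by exact_mod_cast hp.ne_zero
  have hπ := prime_of_nat_prime_of_mod_four_eq_three p hp3
  rw [S₂, setOf_norm_eq_eq_and_dvd hπ (by rw [star_natCast]) (by push_cast; exact dvd_mul_right _ _),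
    ncard_setOf_norm_eq_and_dvd hπ.ne_zero, Zsqrtd.norm_natCast]
  simp only [mul_assoc, mul_right_inj' hp0]
  rw [setOf_mul_norm_eq_eq_empty hc, Set.ncard_empty]

end InertPrime

theorem S₂_prime_pow_mul {p : ℕ} (hp : p.Prime) {c : ℤ} (hc : ¬ (p : ℤ) ∣ c) (k : ℕ) :
    (S₂ (p ^ k * c) : ℤ) = (∑ i ∈ range (k + 1), χ₄ p ^ i) * S₂ c := by
  rcases hp.eq_two_or_odd' with rfl | hodd
  · simp [S₂_two_pow_mul, sum_range_succ']
  rcases (by have := Nat.odd_iff.mp hodd; omega : p % 4 = 1 ∨ p % 4 = 3) with hp1 | hp3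
  · rw [χ₄_nat_one_mod_four hp1, S₂_pow_mul_of_mod_four_eq_one hp hp1 hc]
    simp
  · rw [χ₄_nat_three_mod_four hp3, neg_one_geom_sum]
    obtain ⟨j, rfl | rfl⟩ := k.even_or_odd'
    · simp [S₂_pow_two_mul_mul_of_mod_four_eq_three hp hp3]
    · rw [pow_succ, mul_assoc, S₂_pow_two_mul_mul_of_mod_four_eq_three hp hp3,
        S₂_mul_eq_zero_of_mod_four_eq_three hp hp3 hc]
      simp [Nat.even_add_one]

theorem S₂_eq_four_mul_χ₄DivisorSum {n : ℕ} (hn : n ≠ 0) : (S₂ n : ℤ) = 4 * χ₄DivisorSum n := by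
  induction n using Nat.recOnPrimePow with
  | zero => contradiction
  | one => simp [S₂_one, isMultiplicative_χ₄DivisorSum.map_one]
  | prime_pow_mul a p k hp hpa _ ih =>
    have ha : a ≠ 0 := by rintro rfl; simp at hn
    have hcop : (p ^ k).Coprime a := .pow_left k (hp.coprime_iff_not_dvd.mpr hpa)
    push_cast
    rw [S₂_prime_pow_mul hp (by exact_mod_cast hpa), ih ha,
      isMultiplicative_χ₄DivisorSum.map_mul_of_coprime hcop, χ₄DivisorSum_prime_pow hp]
    ring

end GaussianInt

theorem stmt_0 (n : ℕ) (hn : 1 ≤ n) :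
    ({p : ℤ × ℤ | p.1 ^ 2 + p.2 ^ 2 = (n : ℤ)}.ncard : ℤ) =
      4 * (((n.divisors.filter (fun d => d % 4 = 1)).card : ℤ) -
           ((n.divisors.filter (fun d => d % 4 = 3)).card : ℤ)) := by
  rw [GaussianInt.ncard_setOf_sq_add_sq_eq, GaussianInt.S₂_eq_four_mul_χ₄DivisorSum (by omega),
    χ₄DivisorSum_eq_card_sub_card]
end

section
/- For every natural number n ≥ 1, the number of pairs (x,y) of integers with x² + 2y² = n equals 2(d₁,₈(n) + d₃,₈(n) − d₅,₈(n) − d₇,₈(n)), where d_{j,8}(n) is the number of positive divisors d of n with d ≡ j (mod 8). -/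
/-!
A solution of `x² + 2y² = n` is an element `x + y√-2` of norm `n` in `ℤ√-2`, a Euclidean domain
whose only units are `±1`; so the count is twice the number `a(n)` of associate classes of
elements of norm `n`. An element of norm `mn` with `m, n` coprime factors, uniquely up to units,
into elements of norms `m` and `n`, hence `a` is multiplicative. At a prime power `p ^ k` the
element is, up to a unit, a product of primes above `p`: for `p = 2 = -√-2²` only `√-2 ^ k`
occurs; if `-2` is a square mod `p` then `p = π π̄` with `π, π̄` non-associated primes and the
`k + 1` classes are those of `π ^ i π̄ ^ (k - i)`; otherwise `p` stays prime and there is one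
class (`p ^ (k/2)`) or none according to the parity of `k`. In each case
`a(p ^ k) = ∑_{i ≤ k} χ₈'(p) ^ i`, so `a(n) = ∑_{d ∣ n} χ₈'(d)`.
-/

open Finset
open scoped Pointwise

theorem Int.two_mul_abs_sub_mul_round_div_le (a : ℤ) {b : ℤ} (hb : 0 < b) :
    2 * |a - b * round ((a : ℚ) / b)| ≤ b := by
  have hb' : (0 : ℚ) < b := by exact_mod_cast hb
  have hround := abs_sub_round ((a : ℚ) / b)
  have : |(a : ℚ) - b * round ((a : ℚ) / b)| = b * |(a : ℚ) / b - round ((a : ℚ) / b)| := by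
    rw [← abs_of_pos hb', ← abs_mul, abs_of_pos hb', mul_sub, mul_div_cancel₀ _ hb'.ne']
  have : 2 * |(a : ℚ) - b * round ((a : ℚ) / b)| ≤ b := by
    rw [this]; nlinarith
  exact_mod_cast this

theorem Nat.Coprime.sum_divisors_mul_of_isMultiplicative {R : Type*} [CommSemiring R] {f : ℕ → R}
    (hf : ∀ a b, a.Coprime b → f (a * b) = f a * f b) {m n : ℕ} (hmn : m.Coprime n) :
    ∑ d ∈ (m * n).divisors, f d = (∑ d ∈ m.divisors, f d) * ∑ d ∈ n.divisors, f d := by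
  rw [hmn.divisors_mul, sum_map, sum_mul_sum, ← sum_product']
  refine (sum_attach _ fun p : ℕ × ℕ => f (p.1 * p.2)).trans (sum_congr rfl fun p hp => ?_)
  simp only [mem_product, Nat.mem_divisors] at hp
  exact hf _ _ ((hmn.coprime_dvd_left hp.1.1).coprime_dvd_right hp.2.1)

namespace ZMod

theorem χ₈'_natCast_eq_ite_isSquare {p : ℕ} [Fact p.Prime] (hp2 : p ≠ 2) :
    χ₈' p = if IsSquare (-2 : ZMod p) then 1 else -1 := by
  have hodd := (Nat.Prime.mod_two_eq_one_iff_ne_two Fact.out).2 hp2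
  rw [χ₈'_nat_eq_if_mod_eight, if_neg (by omega)]
  exact if_congr (exists_sq_eq_neg_two_iff hp2).symm rfl rfl

theorem sum_χ₈'_eq_card_filter (s : Finset ℕ) :
    ∑ d ∈ s, χ₈' d = ((s.filter fun d => d % 8 = 1).card : ℤ) + (s.filter fun d => d % 8 = 3).card
      - (s.filter fun d => d % 8 = 5).card - (s.filter fun d => d % 8 = 7).card := by
  simp only [card_filter, Nat.cast_sum, Nat.cast_ite, Nat.cast_one, Nat.cast_zero,
    ← sum_add_distrib, ← sum_sub_distrib]
  refine sum_congr rfl fun d _ => ?_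
  rw [χ₈'_nat_eq_if_mod_eight]
  split_ifs <;> omega

end ZMod

namespace Zsqrtd

variable {d : ℤ}

theorem norm_pow (z : ℤ√d) (k : ℕ) : (z ^ k).norm = z.norm ^ k :=
  map_pow normMonoidHom z k

theorem not_isUnit_natCast {p : ℕ} (hp : 1 < p) : ¬IsUnit (p : ℤ√d) := by
  rw [isUnit_iff_norm_isUnit, norm_natCast, Int.isUnit_iff]
  have : (1 : ℤ) < p := by exact_mod_cast hp
  rintro (h | h) <;> nlinarith

theorem isUnit_iff_eq_one_or_eq_neg_one (hd : d < -1) {z : ℤ√d} :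
    IsUnit z ↔ z = 1 ∨ z = -1 := by
  rw [← norm_eq_one_iff' (by omega), norm_def]
  constructor
  · intro h
    have him : z.im = 0 := by nlinarith [mul_self_nonneg z.re, mul_self_nonneg z.im]
    have hre : z.re * z.re = 1 := by simpa [him] using h
    rcases Int.eq_one_or_neg_one_of_mul_eq_one hre with hre | hre
    · exact .inl (Zsqrtd.ext hre him)
    · exact .inr (Zsqrtd.ext hre him)
  · rintro (rfl | rfl) <;> simp

theorem associated_iff_eq_or_eq_neg (hd : d < -1) {z w : ℤ√d} :
    Associated z w ↔ z = w ∨ z = -w := by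
  constructor
  · rintro ⟨u, rfl⟩
    rcases (isUnit_iff_eq_one_or_eq_neg_one hd).1 u.isUnit with hu | hu <;> simp [hu]
  · rintro (rfl | rfl)
    exacts [Associated.refl _, Associated.neg_left_iff.2 (Associated.refl _)]

theorem irreducible_of_prime_norm {z : ℤ√d} (h : Prime z.norm) : Irreducible z := by
  refine ⟨fun hu => h.not_isUnit ((isUnit_iff_norm_isUnit z).1 hu), fun a b hab => ?_⟩
  have hnorm : IsUnit a.norm ∨ IsUnit b.norm :=
    h.irreducible.isUnit_or_isUnit (by rw [hab, norm_mul])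
  simpa only [← isUnit_iff_norm_isUnit] using hnorm

theorem prime_star {π : ℤ√d} (hπ : Prime π) : Prime (star π) :=
  (MulEquiv.prime_iff (starRingAut : RingAut (ℤ√d))).2 hπ

theorem dvd_or_star_dvd_of_dvd_norm {π z : ℤ√d} (hπ : Prime π) (h : π ∣ (z.norm : ℤ√d)) :
    π ∣ z ∨ star π ∣ z := by
  rw [norm_eq_mul_conj] at h
  refine (hπ.dvd_or_dvd h).imp_right fun h => ?_
  simpa [starRingEnd_apply] using map_dvd (starRingEnd (ℤ√d)) h

theorem isCoprime_of_isCoprime_norm {a b : ℤ√d} (h : IsCoprime a.norm b.norm) : IsCoprime a b := by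
  have := h.map (Int.castRingHom (ℤ√d))
  simp only [eq_intCast, norm_eq_mul_conj] at this
  exact this.of_mul_left_left.of_mul_right_left

theorem isSquare_of_norm_eq_prime {p : ℕ} [Fact p.Prime] {z : ℤ√d} (hz : z.norm = p) :
    IsSquare (d : ZMod p) := by
  have hzero : (z.re : ZMod p) * z.re - d * z.im * z.im = 0 := by
    simpa [norm_def] using congrArg (Int.cast : ℤ → ZMod p) hz
  by_cases him : (z.im : ZMod p) = 0
  · exfalso
    have hre : (z.re : ZMod p) = 0 := by simpa [him] using hzero
    rw [ZMod.intCast_zmod_eq_zero_iff_dvd] at him hre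
    have hdvd : ((p : ℤ) : ℤ√d) ∣ z := (intCast_dvd _ _).2 ⟨hre, him⟩
    have hp := (Fact.out : p.Prime)
    have hsq : (p : ℤ) * p ∣ p * 1 := by
      simpa [normMonoidHom, hz] using map_dvd normMonoidHom hdvd
    have : (p : ℤ) ∣ 1 := (mul_dvd_mul_iff_left (by exact_mod_cast hp.ne_zero)).1 hsq
    exact hp.not_dvd_one (by exact_mod_cast this)
  · exact ⟨z.re / z.im, by field_simp; linear_combination -hzero⟩

theorem not_prime_natCast_of_isSquare {p : ℕ} (hp : p.Prime) (h : IsSquare (d : ZMod p)) :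
    ¬Prime (p : ℤ√d) := by
  have := Fact.mk hp
  obtain ⟨c, hc⟩ := h
  obtain ⟨a, ha⟩ : ∃ a : ℤ, (p : ℤ) ∣ a * a - d := by
    refine ⟨c.val, (ZMod.intCast_zmod_eq_zero_iff_dvd _ _).1 ?_⟩
    push_cast
    rw [ZMod.natCast_zmod_val, hc, sub_self]
  have hprod : (⟨a, 1⟩ : ℤ√d) * ⟨a, -1⟩ = ((a * a - d : ℤ) : ℤ√d) := by
    ext <;> simp [sub_eq_add_neg]
  have hp1 : ¬(p : ℤ) ∣ 1 := by exact_mod_cast hp.not_dvd_one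
  intro hprime
  rcases hprime.dvd_or_dvd (hprod ▸ Int.cast_dvd_cast _ _ ha) with h | h <;>
    rw [← Int.cast_natCast, intCast_dvd] at h
  · exact hp1 h.2
  · exact hp1 (dvd_neg.1 h.2)

theorem not_dvd_star_of_norm_eq_prime (hd : d < -1) {p : ℕ} (hp : p.Prime) (hpd : ¬(p : ℤ) ∣ d)
    {π : ℤ√d} (hπ : π.norm = p) : ¬π ∣ star π := by
  have : Fact (d < 0) := ⟨by omega⟩
  rintro ⟨u, hu⟩
  have hu1 : u.norm = 1 := by
    have h := congrArg norm hu
    rw [norm_conj, norm_mul, hπ, eq_comm, mul_eq_left₀ (by exact_mod_cast hp.ne_zero)] at h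
    exact h
  rcases (isUnit_iff_eq_one_or_eq_neg_one hd).1 ((norm_eq_one_iff' (by omega) u).1 hu1) with
    rfl | rfl
  · have him : π.im = 0 := by have := congrArg im hu; simp at this; omega
    have hsq : p = π.re.natAbs * π.re.natAbs := by
      zify; rw [← hπ, norm_def, him, abs_mul_abs_self]; ring
    rcases Nat.prime_mul_iff.1 (hsq ▸ hp) with ⟨h, h'⟩ | ⟨h, h'⟩ <;>
      exact Nat.not_prime_one (h' ▸ h)
  · have hre : π.re = 0 := by have := congrArg re hu; simp at this; omega
    have hdp : (-d).natAbs ∣ p := by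
      have h : -d ∣ (p : ℤ) := ⟨π.im * π.im, by rw [← hπ, norm_def, hre]; ring⟩
      rwa [← Int.natAbs_dvd_natAbs, Int.natAbs_natCast] at h
    rcases hp.eq_one_or_self_of_dvd _ hdp with h | h
    · omega
    · exact hpd ⟨-1, by omega⟩

theorem natAbs_norm_dvd_of_dvd_natCast {p m n : ℕ} (hpn : p.Coprime n) {π z : ℤ√d}
    (hπp : π ∣ (p : ℤ√d)) (hπz : π ∣ z) (hz : z.norm = m * n) : π.norm.natAbs ∣ m := by
  have hp : π.norm.natAbs ∣ p ^ 2 := by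
    have h : π.norm ∣ (p : ℤ√d).norm := map_dvd normMonoidHom hπp
    rw [norm_natCast] at h
    simpa [sq, Int.natAbs_mul] using Int.natAbs_dvd_natAbs.2 h
  refine ((hpn.pow_left 2).coprime_dvd_left hp).dvd_of_dvd_mul_right ?_
  have h : π.norm ∣ z.norm := map_dvd normMonoidHom hπz
  rw [hz] at h
  simpa [Int.natAbs_mul] using Int.natAbs_dvd_natAbs.2 h

section NegativeD

variable [Fact (d < 0)]

instance : NoZeroDivisors (ℤ√d) where
  eq_zero_or_eq_zero_of_mul_eq_zero {a b} h := by
    have h := congrArg norm h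
    rw [norm_mul, norm_zero, mul_eq_zero] at h
    simpa only [norm_eq_zero_iff Fact.out] using h

instance : IsDomain (ℤ√d) := NoZeroDivisors.to_isDomain _

theorem norm_ne_zero {z : ℤ√d} (hz : z ≠ 0) : z.norm ≠ 0 :=
  (norm_eq_zero_iff Fact.out z).not.2 hz

theorem associated_one_of_norm_eq_one {z : ℤ√d} (hz : z.norm = 1) : Associated z 1 :=
  associated_one_iff_isUnit.2 ((norm_eq_one_iff' (Fact.out : d < 0).le z).1 hz)

theorem associated_of_associated_mul_mul {a b a' b' : ℤ√d} (h : Associated (a * b) (a' * b'))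
    (ha : a.norm = a'.norm) (hb : b.norm = b'.norm) (hab : IsCoprime a.norm b.norm) :
    Associated a a' := by
  refine associated_of_dvd_dvd ?_ ?_
  · exact (isCoprime_of_isCoprime_norm (hb ▸ hab)).dvd_of_dvd_mul_right
      ((dvd_mul_right a b).trans h.dvd)
  · exact (isCoprime_of_isCoprime_norm (ha ▸ hab)).dvd_of_dvd_mul_right
      ((dvd_mul_right a' b').trans h.symm.dvd)

theorem associated_pow_mul_star_pow_of_norm_eq {π : ℤ√d} (hπ : Prime π) {k : ℕ} {z : ℤ√d}
    (hz : z.norm = π.norm ^ k) : ∃ i ≤ k, Associated z (π ^ i * star π ^ (k - i)) := by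
  induction k generalizing z with
  | zero => exact ⟨0, le_rfl, by simpa using associated_one_of_norm_eq_one (by simpa using hz)⟩
  | succ k ih =>
    have hnorm : π.norm ≠ 0 := norm_ne_zero hπ.ne_zero
    have hdvd : π ∣ (z.norm : ℤ√d) := by
      rw [hz, Int.cast_pow, norm_eq_mul_conj, mul_pow]
      exact (dvd_pow_self π k.succ_ne_zero).mul_right _
    rcases dvd_or_star_dvd_of_dvd_norm hπ hdvd with ⟨c, rfl⟩ | ⟨c, hc⟩
    · rw [norm_mul, pow_succ', mul_right_inj' hnorm] at hz
      obtain ⟨i, hi, hc⟩ := ih hz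
      refine ⟨i + 1, by omega, ?_⟩
      rw [Nat.add_sub_add_right, pow_succ', mul_assoc]
      exact hc.mul_left π
    · rw [hc, norm_mul, norm_conj, pow_succ', mul_right_inj' hnorm] at hz
      obtain ⟨i, hi, hc'⟩ := ih hz
      refine ⟨i, by omega, ?_⟩
      rw [hc, Nat.sub_add_comm hi, pow_succ', mul_left_comm]
      exact hc'.mul_left _

theorem even_and_associated_of_norm_eq_pow {p : ℕ} (hp : Prime (p : ℤ√d)) {k : ℕ} {z : ℤ√d}
    (hz : z.norm = (p : ℤ) ^ k) : Even k ∧ Associated z ((p : ℤ√d) ^ (k / 2)) := by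
  induction k using Nat.strong_induction_on generalizing z with
  | _ k ih =>
    rcases Nat.eq_zero_or_pos k with rfl | hk
    · exact ⟨Even.zero, by simpa using associated_one_of_norm_eq_one (by simpa using hz)⟩
    have hp0 : (p : ℤ) ≠ 0 := by exact_mod_cast fun h => hp.ne_zero (by simp [h])
    have hdvd : (p : ℤ√d) ∣ (z.norm : ℤ√d) := by
      rw [hz]; push_cast; exact dvd_pow_self _ hk.ne'
    obtain ⟨c, rfl⟩ : (p : ℤ√d) ∣ z := by
      simpa using dvd_or_star_dvd_of_dvd_norm hp hdvd
    rw [norm_mul, norm_natCast] at hz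
    have hk2 : 2 ≤ k := by
      by_contra hk2
      obtain rfl : k = 1 := by omega
      have : (p : ℤ) * c.norm = 1 := mul_left_cancel₀ hp0 (by linear_combination hz)
      have hp1 : (p : ℤ) = 1 := Int.eq_one_of_mul_eq_one_right (by positivity) this
      exact hp.not_isUnit (by simp [show p = 1 by exact_mod_cast hp1])
    have hc : c.norm = (p : ℤ) ^ (k - 2) := by
      rw [← Nat.sub_add_cancel hk2, pow_add, sq] at hz
      exact mul_left_cancel₀ (mul_ne_zero hp0 hp0) (by linear_combination hz)
    obtain ⟨heven, hassoc⟩ := ih (k - 2) (by omega) hc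
    refine ⟨by simpa [Nat.sub_add_cancel hk2] using heven.add even_two, ?_⟩
    have : k / 2 = (k - 2) / 2 + 1 := by omega
    rw [this, pow_succ']
    exact hassoc.mul_left _

theorem emultiplicity_pow_mul_star_pow {π : ℤ√d} (hπ : Prime π) (h : ¬π ∣ star π) (i m : ℕ) :
    emultiplicity π (π ^ i * star π ^ m) = i := by
  rw [emultiplicity_mul hπ, emultiplicity_pow_self_of_prime hπ, emultiplicity_pow hπ,
    emultiplicity_eq_zero.2 h, mul_zero, add_zero]

end NegativeD

section UniqueFactorization

variable [UniqueFactorizationMonoid (ℤ√d)]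

theorem exists_norm_eq_of_not_prime [Fact (d < 0)] {p : ℕ} (hp : p.Prime) (h : ¬Prime (p : ℤ√d)) :
    ∃ π : ℤ√d, π.norm = p := by
  rw [← UniqueFactorizationMonoid.irreducible_iff_prime, irreducible_iff] at h
  push Not at h
  obtain ⟨a, b, hab, ha, hb⟩ := h (not_isUnit_natCast hp.one_lt)
  have hnorm : a.norm.natAbs * b.norm.natAbs = p ^ 2 := by
    rw [← Int.natAbs_mul, ← norm_mul, ← hab, norm_natCast, Int.natAbs_mul, Int.natAbs_natCast, sq]
  obtain ⟨ha', -⟩ :=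
    (hp.mul_eq_prime_sq_iff (mt norm_eq_one_iff.1 ha) (mt norm_eq_one_iff.1 hb)).1 hnorm
  exact ⟨a, by rw [← ha', Int.natAbs_of_nonneg (norm_nonneg (Fact.out : d < 0).le a)]⟩

theorem exists_prime_dvd_natCast_and_dvd {p : ℕ} (hp : p.Prime) {z : ℤ√d}
    (h : (p : ℤ) ∣ z.norm) : ∃ π : ℤ√d, Prime π ∧ π ∣ (p : ℤ√d) ∧ π ∣ z := by
  obtain ⟨π, hirr, hπp⟩ := WfDvdMonoid.exists_irreducible_factor
    (not_isUnit_natCast (d := d) hp.one_lt) (Nat.cast_ne_zero.2 hp.ne_zero)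
  have hπ := UniqueFactorizationMonoid.irreducible_iff_prime.1 hirr
  have hπz : π ∣ (z.norm : ℤ√d) := hπp.trans (by exact_mod_cast Int.cast_dvd_cast _ _ h)
  rcases dvd_or_star_dvd_of_dvd_norm hπ hπz with hz | hz
  · exact ⟨π, hπ, hπp, hz⟩
  · exact ⟨star π, prime_star hπ,
      by simpa [starRingEnd_apply] using map_dvd (starRingEnd (ℤ√d)) hπp, hz⟩

theorem exists_mul_eq_of_norm_eq_mul [Fact (d < 0)] {m n : ℕ} (hmn : m.Coprime n) {z : ℤ√d}
    (hz : z.norm = m * n) : ∃ u v : ℤ√d, z = u * v ∧ u.norm = m ∧ v.norm = n := by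
  induction m using Nat.strong_induction_on generalizing z with
  | _ m ih =>
    rcases eq_or_ne m 1 with rfl | hm1
    · exact ⟨1, z, (one_mul z).symm, norm_one, by simpa using hz⟩
    rcases eq_or_ne m 0 with rfl | hm0
    · obtain rfl : n = 1 := Nat.coprime_zero_left n |>.1 hmn
      exact ⟨z, 1, (mul_one z).symm, by simpa using hz, norm_one⟩
    -- split off a prime `π ∣ z` lying over a prime factor `p` of `m`
    obtain ⟨p, hp, hpm⟩ := Nat.exists_prime_and_dvd hm1
    obtain ⟨π, hπ, hπp, c, rfl⟩ := exists_prime_dvd_natCast_and_dvd hp (z := z)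
      (hz ▸ dvd_mul_of_dvd_left (by exact_mod_cast hpm) _)
    set a := π.norm.natAbs
    have ha : (a : ℤ) = π.norm := Int.natAbs_of_nonneg (norm_nonneg (Fact.out : d < 0).le π)
    obtain ⟨m', rfl⟩ : a ∣ m :=
      natAbs_norm_dvd_of_dvd_natCast (hmn.coprime_dvd_left hpm) hπp (dvd_mul_right π c) hz
    have ha1 : 1 < a := by
      have ha0 : a ≠ 0 := by simpa [a] using norm_ne_zero hπ.ne_zero
      have ha1 : a ≠ 1 := mt norm_eq_one_iff.1 hπ.not_isUnit
      omega
    have hc : c.norm = m' * n := by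
      rw [norm_mul, ← ha] at hz
      push_cast at hz
      exact mul_left_cancel₀ (by positivity : (a : ℤ) ≠ 0) (by linear_combination hz)
    have hm' : m' < a * m' := lt_mul_left (Nat.pos_of_ne_zero (right_ne_zero_of_mul hm0)) ha1
    obtain ⟨u, v, rfl, hu, hv⟩ := ih m' hm' (hmn.coprime_dvd_left (dvd_mul_left m' a)) hc
    exact ⟨π * u, v, (mul_assoc _ _ _).symm, by rw [norm_mul, hu, ← ha]; push_cast; ring, hv⟩

end UniqueFactorization

structure IsNormTransversal (n : ℤ) (T : Finset (ℤ√d)) : Prop where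
  norm_eq : ∀ t ∈ T, t.norm = n
  exists_associated : ∀ z : ℤ√d, z.norm = n → ∃ t ∈ T, Associated z t
  pairwise_not_associated : (T : Set (ℤ√d)).Pairwise fun s t => ¬Associated s t

namespace IsNormTransversal

variable {n : ℤ} {T : Finset (ℤ√d)}

theorem eq_of_associated (hT : IsNormTransversal n T) {s t : ℤ√d} (hs : s ∈ T) (ht : t ∈ T)
    (h : Associated s t) : s = t :=
  by_contra fun hne => hT.pairwise_not_associated hs ht hne h

theorem ncard_eq (hd : d < -1) (hn : n ≠ 0) (hT : IsNormTransversal n T) :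
    {z : ℤ√d | z.norm = n}.ncard = 2 * T.card := by
  have : Fact (d < 0) := ⟨by omega⟩
  have hset : {z : ℤ√d | z.norm = n} = (T ×ˢ {1, -1}).image fun p => p.2 * p.1 := by
    ext z
    simp only [Set.mem_ofPred_eq, coe_image, coe_product, Set.mem_image, Set.mem_prod, mem_coe,
      mem_insert, mem_singleton, Prod.exists]
    constructor
    · intro hz
      obtain ⟨t, ht, hzt⟩ := hT.exists_associated z hz
      rcases (associated_iff_eq_or_eq_neg hd).1 hzt with rfl | rfl
      exacts [⟨z, 1, ⟨ht, .inl rfl⟩, one_mul z⟩, ⟨t, -1, ⟨ht, .inr rfl⟩, neg_one_mul t⟩]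
    · rintro ⟨t, u, ⟨ht, rfl | rfl⟩, rfl⟩ <;> simp [hT.norm_eq t ht]
  rw [hset, Set.ncard_coe_finset, card_image_of_injOn, card_product, card_pair, mul_comm]
  · simp [Zsqrtd.ext_iff]
  rintro ⟨t, u⟩ htu ⟨t', u'⟩ htu' heq
  simp only [coe_product, Set.mem_prod, mem_coe, mem_insert, mem_singleton] at htu htu' heq
  have hunit : ∀ v : ℤ√d, v = 1 ∨ v = -1 → IsUnit v := by
    rintro v (rfl | rfl) <;> simp
  have ht0 : t ≠ 0 := fun h => hn (by simpa [h] using (hT.norm_eq t htu.1).symm)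
  have htt' : t = t' := hT.eq_of_associated htu.1 htu'.1 <|
    (associated_unit_mul_left t u (hunit u htu.2)).symm.trans <|
      heq ▸ associated_unit_mul_left t' u' (hunit u' htu'.2)
  subst htt'
  simp [mul_right_cancel₀ ht0 heq]

theorem eq_and_eq_of_associated_mul [Fact (d < 0)] {m n : ℤ}
    (hmn : IsCoprime m n) {S T : Finset (ℤ√d)} (hS : IsNormTransversal m S)
    (hT : IsNormTransversal n T) {s s' t t' : ℤ√d} (hs : s ∈ S) (hs' : s' ∈ S) (ht : t ∈ T)
    (ht' : t' ∈ T) (h : Associated (s * t) (s' * t')) : s = s' ∧ t = t' := by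
  have hnorm : ∀ {u v}, u ∈ S → v ∈ T → IsCoprime u.norm v.norm := fun hu hv => by
    rwa [hS.norm_eq _ hu, hT.norm_eq _ hv]
  refine ⟨hS.eq_of_associated hs hs' ?_, hT.eq_of_associated ht ht' ?_⟩
  · exact associated_of_associated_mul_mul h (by rw [hS.norm_eq _ hs, hS.norm_eq _ hs'])
      (by rw [hT.norm_eq _ ht, hT.norm_eq _ ht']) (hnorm hs ht)
  · rw [mul_comm s, mul_comm s'] at h
    exact associated_of_associated_mul_mul h (by rw [hT.norm_eq _ ht, hT.norm_eq _ ht'])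
      (by rw [hS.norm_eq _ hs, hS.norm_eq _ hs']) (hnorm hs ht).symm

theorem mul [Fact (d < 0)] [UniqueFactorizationMonoid (ℤ√d)] {m n : ℕ} (hmn : m.Coprime n)
    {S T : Finset (ℤ√d)} (hS : IsNormTransversal m S) (hT : IsNormTransversal n T) :
    IsNormTransversal (m * n : ℕ) (S * T) where
  norm_eq := by
    simp only [mem_mul]
    rintro _ ⟨s, hs, t, ht, rfl⟩
    rw [norm_mul, hS.norm_eq s hs, hT.norm_eq t ht]; push_cast; ring
  exists_associated z hz := by
    obtain ⟨u, v, rfl, hu, hv⟩ := exists_mul_eq_of_norm_eq_mul hmn (by exact_mod_cast hz)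
    obtain ⟨s, hs, hus⟩ := hS.exists_associated u hu
    obtain ⟨t, ht, hvt⟩ := hT.exists_associated v hv
    exact ⟨s * t, mul_mem_mul hs ht, hus.mul_mul hvt⟩
  pairwise_not_associated := by
    simp only [coe_mul, Set.Pairwise, Set.mem_mul]
    rintro _ ⟨s, hs, t, ht, rfl⟩ _ ⟨s', hs', t', ht', rfl⟩ hne h
    obtain ⟨rfl, rfl⟩ := hS.eq_and_eq_of_associated_mul (Nat.isCoprime_iff_coprime.2 hmn) hT
      hs hs' ht ht' h
    exact hne rfl

theorem card_mul [Fact (d < 0)] {m n : ℕ} (hmn : m.Coprime n)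
    {S T : Finset (ℤ√d)} (hS : IsNormTransversal m S) (hT : IsNormTransversal n T) :
    (S * T).card = S.card * T.card := by
  refine card_mul_iff.2 ?_
  rintro ⟨s, t⟩ ⟨hs, ht⟩ ⟨s', t'⟩ ⟨hs', ht'⟩ h
  obtain ⟨rfl, rfl⟩ := hS.eq_and_eq_of_associated_mul (Nat.isCoprime_iff_coprime.2 hmn) hT
    hs hs' ht ht' (Associated.of_eq h)
  rfl

end IsNormTransversal

section NegativeD

variable [Fact (d < 0)]

theorem isNormTransversal_one : IsNormTransversal 1 ({1} : Finset (ℤ√d)) where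
  norm_eq := by simp
  exists_associated z hz := ⟨1, mem_singleton_self 1, associated_one_of_norm_eq_one hz⟩
  pairwise_not_associated := by simp

theorem isNormTransversal_pow_of_associated_star {π : ℤ√d} (hπ : Prime π)
    (h : Associated (star π) π) (k : ℕ) : IsNormTransversal (π.norm ^ k) {π ^ k} where
  norm_eq := by simp [norm_pow]
  exists_associated z hz := by
    obtain ⟨i, hi, hz⟩ := associated_pow_mul_star_pow_of_norm_eq hπ hz
    refine ⟨π ^ k, mem_singleton_self _, hz.trans ?_⟩
    simpa [← pow_add, Nat.add_sub_cancel' hi] using ((h.pow_pow (n := k - i)).mul_left (π ^ i))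
  pairwise_not_associated := by simp

theorem isNormTransversal_pow_mul_star_pow {π : ℤ√d} (hπ : Prime π) (h : ¬π ∣ star π) (k : ℕ) :
    IsNormTransversal (π.norm ^ k) ((range (k + 1)).image fun i => π ^ i * star π ^ (k - i)) where
  norm_eq := by
    simp only [mem_image, mem_range, forall_exists_index, and_imp]
    rintro _ i hi rfl
    rw [norm_mul, norm_pow, norm_pow, norm_conj, ← pow_add, Nat.add_sub_cancel' (by omega)]
  exists_associated z hz := by
    obtain ⟨i, hi, hz⟩ := associated_pow_mul_star_pow_of_norm_eq hπ hz
    exact ⟨_, mem_image_of_mem _ (mem_range.2 (Nat.lt_succ_of_le hi)), hz⟩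
  pairwise_not_associated := by
    simp only [coe_image, coe_range]
    rintro _ ⟨i, -, rfl⟩ _ ⟨j, -, rfl⟩ hne hij
    refine hne (congrArg (fun i => π ^ i * star π ^ (k - i)) ?_)
    simpa [emultiplicity_pow_mul_star_pow hπ h] using
      emultiplicity_eq_of_associated_right (a := π) hij

theorem card_image_pow_mul_star_pow {π : ℤ√d} (hπ : Prime π) (h : ¬π ∣ star π) (k : ℕ) :
    ((range (k + 1)).image fun i => π ^ i * star π ^ (k - i)).card = k + 1 := by
  rw [card_image_of_injective _ fun i j hij => ?_, card_range]
  simpa [emultiplicity_pow_mul_star_pow hπ h] using congrArg (emultiplicity π) hij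

theorem isNormTransversal_natCast_pow {p : ℕ} (hp : Prime (p : ℤ√d)) (k : ℕ) :
    IsNormTransversal ((p : ℤ) ^ k) (if Even k then {(p : ℤ√d) ^ (k / 2)} else ∅) where
  norm_eq t ht := by
    split_ifs at ht with hk
    · obtain ⟨j, rfl⟩ := hk
      simp only [mem_singleton] at ht
      subst ht
      rw [norm_pow, norm_natCast, ← two_mul, Nat.mul_div_cancel_left _ two_pos, pow_mul]
      ring
    · simp at ht
  exists_associated z hz := by
    obtain ⟨hk, hz⟩ := even_and_associated_of_norm_eq_pow hp hz
    exact ⟨_, by simp [hk], hz⟩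
  pairwise_not_associated := by split_ifs <;> simp

end NegativeD

section NegTwo

open ZMod

instance : Fact ((-2 : ℤ) < 0) := ⟨by decide⟩

theorem norm_eq_sq_add_two_mul_sq (z : ℤ√(-2)) : z.norm = z.re ^ 2 + 2 * z.im ^ 2 := by
  rw [norm_def]; ring

instance : Div (ℤ√(-2)) :=
  ⟨fun x y => ⟨round ((x * star y).re / y.norm : ℚ), round ((x * star y).im / y.norm : ℚ)⟩⟩

instance : Mod (ℤ√(-2)) := ⟨fun x y => x - y * (x / y)⟩

theorem div_re (x y : ℤ√(-2)) : (x / y).re = round ((x * star y).re / y.norm : ℚ) := rfl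

theorem div_im (x y : ℤ√(-2)) : (x / y).im = round ((x * star y).im / y.norm : ℚ) := rfl

theorem norm_mod_lt (x : ℤ√(-2)) {y : ℤ√(-2)} (hy : y ≠ 0) : (x % y).norm < y.norm := by
  set N := y.norm
  have hN : 0 < N := (norm_nonneg (by norm_num) y).lt_of_ne (norm_ne_zero hy).symm
  set w := x * star y
  have hrem : x % y * star y =
      ⟨w.re - N * round ((w.re : ℚ) / N), w.im - N * round ((w.im : ℚ) / N)⟩ := by
    have : x % y * star y = w - (N : ℤ√(-2)) * (x / y) := by
      rw [norm_eq_mul_conj]; change (x - y * (x / y)) * star y = _; ring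
    rw [this]
    ext <;> simp only [re_sub, im_sub, re_mul, im_mul, re_intCast, im_intCast]
    · rw [div_re]; ring
    · rw [div_im]; ring
  have h1 := Int.two_mul_abs_sub_mul_round_div_le w.re hN
  have h2 := Int.two_mul_abs_sub_mul_round_div_le w.im hN
  -- both coordinates of `(x % y) * star y` are at most `N / 2` in absolute value
  have hlt : (x % y).norm * N < N * N := by
    have : (x % y).norm * N = (x % y * star y).norm := by rw [norm_mul, norm_conj]
    rw [this, hrem, norm_eq_sq_add_two_mul_sq, ← sq_abs, ← sq_abs (_ - _)]
    nlinarith [abs_nonneg (w.re - N * round ((w.re : ℚ) / N)),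
      abs_nonneg (w.im - N * round ((w.im : ℚ) / N))]
  exact lt_of_mul_lt_mul_right hlt hN.le

instance : EuclideanDomain (ℤ√(-2)) :=
  { Zsqrtd.commRing, Zsqrtd.nontrivial with
    quotient := (· / ·)
    remainder := (· % ·)
    quotient_zero := fun x => by ext <;> simp [div_re, div_im]
    quotient_mul_add_remainder_eq := fun x y => by
      change y * (x / y) + (x - y * (x / y)) = x; ring
    r := _
    r_wellFounded := (measure (Int.natAbs ∘ norm)).wf
    remainder_lt := fun x y hy => by
      have := norm_mod_lt x hy
      have := norm_nonneg (by norm_num) (x % y)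
      change (x % y).norm.natAbs < y.norm.natAbs
      omega
    mul_left_not_lt := fun a b hb => by
      change ¬(a * b).norm.natAbs < a.norm.natAbs
      rw [norm_mul, Int.natAbs_mul, not_lt]
      exact Nat.le_mul_of_pos_right _ (Int.natAbs_pos.2 (norm_ne_zero hb)) }

theorem prime_sqrtd : Prime (sqrtd : ℤ√(-2)) :=
  (irreducible_of_prime_norm (by simpa [norm_def] using Int.prime_two)).prime

theorem associated_star_sqrtd : Associated (star sqrtd : ℤ√(-2)) sqrtd :=
  (associated_iff_eq_or_eq_neg (by norm_num)).2 (.inr (by ext <;> simp))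

theorem exists_isNormTransversal_prime_pow {p : ℕ} (hp : p.Prime) (k : ℕ) :
    ∃ T : Finset (ℤ√(-2)), IsNormTransversal (p ^ k : ℕ) T ∧
      (T.card : ℤ) = ∑ d ∈ (p ^ k).divisors, χ₈' d := by
  have := Fact.mk hp
  have hsum : ∑ d ∈ (p ^ k).divisors, χ₈' d = ∑ i ∈ range (k + 1), χ₈' p ^ i := by
    rw [Nat.sum_divisors_prime_pow hp]
    exact sum_congr rfl fun i _ => by rw [Nat.cast_pow, map_pow]
  rw [hsum]
  rcases eq_or_ne p 2 with rfl | hp2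
  · refine ⟨{sqrtd ^ k}, ?_, by simp⟩
    simpa [norm_def] using
      isNormTransversal_pow_of_associated_star prime_sqrtd associated_star_sqrtd k
  by_cases hsq : IsSquare (-2 : ZMod p)
  · obtain ⟨π, hπ⟩ : ∃ π : ℤ√(-2), π.norm = p := exists_norm_eq_of_not_prime hp
      (not_prime_natCast_of_isSquare hp (by exact_mod_cast hsq))
    have hπp : Prime π := (irreducible_of_prime_norm (hπ ▸ Nat.prime_iff_prime_int.1 hp)).prime
    have hπσ : ¬π ∣ star π := not_dvd_star_of_norm_eq_prime (by norm_num) hp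
      (fun h => hp2 ((Nat.prime_dvd_prime_iff_eq hp Nat.prime_two).1 (by exact_mod_cast dvd_neg.1 h))) hπ
    refine ⟨_, by simpa [hπ] using isNormTransversal_pow_mul_star_pow hπp hπσ k, ?_⟩
    simp [card_image_pow_mul_star_pow hπp hπσ, χ₈'_natCast_eq_ite_isSquare hp2, hsq]
  · have hpp : Prime (p : ℤ√(-2)) := by
      by_contra h
      obtain ⟨π, hπ⟩ := exists_norm_eq_of_not_prime hp h
      exact hsq (by exact_mod_cast isSquare_of_norm_eq_prime hπ)
    refine ⟨_, by exact_mod_cast isNormTransversal_natCast_pow hpp k, ?_⟩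
    rw [χ₈'_natCast_eq_ite_isSquare hp2, if_neg hsq, neg_one_geom_sum]
    split_ifs <;> simp_all [Nat.even_add_one]

theorem exists_isNormTransversal {n : ℕ} (hn : n ≠ 0) :
    ∃ T : Finset (ℤ√(-2)), IsNormTransversal n T ∧ (T.card : ℤ) = ∑ d ∈ n.divisors, χ₈' d := by
  induction n using Nat.recOnPosPrimePosCoprime with
  | prime_pow p k hp _ => exact exists_isNormTransversal_prime_pow hp k
  | zero => exact absurd rfl hn
  | one => exact ⟨{1}, by exact_mod_cast isNormTransversal_one, by simp⟩
  | coprime a b _ _ hab iha ihb =>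
    obtain ⟨S, hS, hScard⟩ := iha (by omega)
    obtain ⟨T, hT, hTcard⟩ := ihb (by omega)
    refine ⟨S * T, hS.mul hab hT, ?_⟩
    rw [hS.card_mul hab hT, Nat.cast_mul, hScard, hTcard,
      hab.sum_divisors_mul_of_isMultiplicative fun a b _ => by push_cast; exact map_mul _ _ _]

theorem ncard_sq_add_two_mul_sq_eq (n : ℤ) :
    {p : ℤ × ℤ | p.1 ^ 2 + 2 * p.2 ^ 2 = n}.ncard = {z : ℤ√(-2) | z.norm = n}.ncard := by
  rw [← Set.ncard_image_of_injective _ (f := fun z : ℤ√(-2) => (z.re, z.im))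
    fun z w h => Zsqrtd.ext (congrArg Prod.fst h) (congrArg Prod.snd h)]
  congr 1
  ext ⟨a, b⟩
  simp only [Set.mem_ofPred_eq, Set.mem_image, Prod.mk.injEq, norm_eq_sq_add_two_mul_sq]
  exact ⟨fun h => ⟨⟨a, b⟩, h, rfl, rfl⟩, by rintro ⟨z, hz, rfl, rfl⟩; exact hz⟩

end NegTwo

end Zsqrtd

open Zsqrtd ZMod

theorem stmt_1 (n : ℕ) (hn : 1 ≤ n) :
    ({p : ℤ × ℤ | p.1 ^ 2 + 2 * p.2 ^ 2 = (n : ℤ)}.ncard : ℤ) =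
      2 * (((n.divisors.filter (fun d => d % 8 = 1)).card : ℤ) +
           ((n.divisors.filter (fun d => d % 8 = 3)).card : ℤ) -
           ((n.divisors.filter (fun d => d % 8 = 5)).card : ℤ) -
           ((n.divisors.filter (fun d => d % 8 = 7)).card : ℤ)) := by
  obtain ⟨T, hT, hcard⟩ := exists_isNormTransversal (by omega : n ≠ 0)
  rw [ncard_sq_add_two_mul_sq_eq, hT.ncard_eq (by norm_num) (by omega), ← sum_χ₈'_eq_card_filter,
    ← hcard]
  push_cast
  ring
end

section
/- For every natural number n, S₂(4n+1) = T₂(n), where S₂(m) counts integer pairs (x,y) with x² + y² = m, and T₂(n) counts integer pairs (x,y) with t_x + t_y = n, where t_x = x(x+1)/2. -/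
lemma tri_sum_iff (a b m : ℤ) :
    a * (a + 1) / 2 + b * (b + 1) / 2 = m ↔ a * (a + 1) + b * (b + 1) = 2 * m := by
  obtain ⟨k, hk⟩ := Int.even_mul_succ_self a
  obtain ⟨l, hl⟩ := Int.even_mul_succ_self b
  have hk2 : a * (a + 1) = 2 * k := by omega
  have hl2 : b * (b + 1) = 2 * l := by omega
  rw [hk2, hl2, Int.mul_ediv_cancel_left _ (by norm_num), Int.mul_ediv_cancel_left _ (by norm_num)]
  omega

theorem stmt_3 (n : ℕ) :
    {p : ℤ × ℤ | p.1 ^ 2 + p.2 ^ 2 = (4 * n + 1 : ℤ)}.ncard =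
      {p : ℤ × ℤ | p.1 * (p.1 + 1) / 2 + p.2 * (p.2 + 1) / 2 = (n : ℤ)}.ncard := by
  have hinj : Function.Injective (fun p : ℤ × ℤ => (p.1 + p.2 + 1, p.1 - p.2)) := by
    intro ⟨a, b⟩ ⟨c, d⟩ h
    simp only [Prod.mk.injEq] at h
    obtain ⟨h1, h2⟩ := h
    simp only [Prod.mk.injEq]
    omega
  have himg : {p : ℤ × ℤ | p.1 ^ 2 + p.2 ^ 2 = (4 * n + 1 : ℤ)} =
      (fun p : ℤ × ℤ => (p.1 + p.2 + 1, p.1 - p.2)) ''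
        {p : ℤ × ℤ | p.1 * (p.1 + 1) / 2 + p.2 * (p.2 + 1) / 2 = (n : ℤ)} := by
    ext ⟨x, y⟩
    simp only [Set.mem_setOf_eq, Set.mem_image, Prod.mk.injEq, Prod.exists]
    constructor
    · intro h
      rcases Int.even_or_odd x with ⟨u, hu⟩ | ⟨u, hu⟩ <;>
        rcases Int.even_or_odd y with ⟨v, hv⟩ | ⟨v, hv⟩ <;> subst hu <;> subst hv
      · exfalso
        have h4 : (4 : ℤ) ∣ ((u + u) ^ 2 + (v + v) ^ 2) := ⟨u ^ 2 + v ^ 2, by ring⟩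
        rw [h] at h4
        omega
      · -- x = 2u, y = 2v+1
        refine ⟨u + v, u - v - 1, ?_, by ring, by ring⟩
        rw [tri_sum_iff]
        have h2 : 2 * ((u + v) * (u + v + 1) + (u - v - 1) * (u - v - 1 + 1)) =
            2 * (2 * (n : ℤ)) := by linear_combination h
        exact mul_left_cancel₀ two_ne_zero h2
      · -- x = 2u+1, y = 2v
        refine ⟨u + v, u - v, ?_, by ring, by ring⟩
        rw [tri_sum_iff]
        have h2 : 2 * ((u + v) * (u + v + 1) + (u - v) * (u - v + 1)) =
            2 * (2 * (n : ℤ)) := by linear_combination h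
        exact mul_left_cancel₀ two_ne_zero h2
      · exfalso
        have h2 : (2 : ℤ) ∣ ((2 * u + 1) ^ 2 + (2 * v + 1) ^ 2) :=
          ⟨2 * u ^ 2 + 2 * u + 2 * v ^ 2 + 2 * v + 1, by ring⟩
        rw [h] at h2
        omega
    · rintro ⟨a, b, hab, hx, hy⟩
      rw [tri_sum_iff] at hab
      subst hx hy
      linear_combination 2 * hab
  rw [himg, Set.ncard_image_of_injective _ hinj]
end

section
/- For every natural number n, S_{1,2}(8n+1) = M_{1-1}(n), where S_{1,2}(m) counts integer pairs (x,y) with x² + 2y² = m, and M_{1-1}(n) counts integer pairs (x,y) with x² + t_y = n, where t_y = y(y+1)/2. -/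
theorem stmt_5 (n : ℕ) :
    {p : ℤ × ℤ | p.1 ^ 2 + 2 * p.2 ^ 2 = (8 * n + 1 : ℤ)}.ncard =
      {p : ℤ × ℤ | p.1 ^ 2 + p.2 * (p.2 + 1) / 2 = (n : ℤ)}.ncard := by
  have hinj : Function.Injective (fun p : ℤ × ℤ => ((2 * p.2 + 1, 2 * p.1) : ℤ × ℤ)) := by
    intro ⟨a, b⟩ ⟨c, d⟩ h
    simp only [Prod.mk.injEq] at h
    ext <;> omega
  have himg : {p : ℤ × ℤ | p.1 ^ 2 + 2 * p.2 ^ 2 = (8 * n + 1 : ℤ)} =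
      (fun p : ℤ × ℤ => ((2 * p.2 + 1, 2 * p.1) : ℤ × ℤ)) ''
        {p : ℤ × ℤ | p.1 ^ 2 + p.2 * (p.2 + 1) / 2 = (n : ℤ)} := by
    ext ⟨x, y⟩
    simp only [Set.mem_image, Set.mem_setOf_eq, Prod.mk.injEq, Prod.exists]
    constructor
    · intro h
      -- x is odd
      have hx : Odd x := by
        by_contra hx
        rw [Int.not_odd_iff_even] at hx
        obtain ⟨c, hc⟩ := hx
        have h2 : 2 * (2 * c ^ 2 + y ^ 2) = 8 * (n : ℤ) + 1 := by
          rw [hc] at h; linear_combination h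
        generalize 2 * c ^ 2 + y ^ 2 = k at h2
        omega
      obtain ⟨a, ha⟩ := hx
      -- y is even
      have hy2 : 2 * y ^ 2 = 8 * (n : ℤ) - 4 * a ^ 2 - 4 * a := by
        rw [ha] at h; linear_combination h
      have hy : Even y := by
        rcases Int.even_or_odd y with he | ho
        · exact he
        · exfalso
          obtain ⟨b, hb⟩ := ho
          have h4 : 8 * b ^ 2 + 8 * b + 2 = 8 * (n : ℤ) - 4 * a ^ 2 - 4 * a := by
            rw [hb] at hy2; linear_combination hy2
          generalize b ^ 2 = s at h4
          generalize a ^ 2 = t at h4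
          omega
      obtain ⟨b, hb⟩ := hy
      refine ⟨b, a, ?_, by omega, by omega⟩
      have hd : 2 * (a * (a + 1) / 2) = a * (a + 1) :=
        Int.mul_ediv_cancel' ((Int.even_mul_succ_self a).two_dvd)
      have h3 : 8 * b ^ 2 + 4 * (a * (a + 1)) = 8 * (n : ℤ) := by
        rw [hb] at hy2; linear_combination hy2
      generalize hq : a * (a + 1) / 2 = q at hd ⊢
      generalize a * (a + 1) = m at hd h3
      generalize b ^ 2 = s at h3 ⊢
      omega
    · rintro ⟨u, v, hv, hx, hy⟩
      have hd : 2 * (v * (v + 1) / 2) = v * (v + 1) :=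
        Int.mul_ediv_cancel' ((Int.even_mul_succ_self v).two_dvd)
      subst hx hy
      linear_combination 8 * hv - 4 * hd
  rw [himg, Set.ncard_image_of_injective _ hinj]
end

section
/- For every natural number n, S_{1,2}(8n+3) = T_{1,2}(n), where S_{1,2}(m) counts integer pairs (x,y) with x² + 2y² = m, and T_{1,2}(n) counts integer pairs (x,y) with t_x + 2t_y = n, where t_x = x(x+1)/2. -/
theorem stmt_6 (n : ℕ) :
    {p : ℤ × ℤ | p.1 ^ 2 + 2 * p.2 ^ 2 = (8 * n + 3 : ℤ)}.ncard =
      {p : ℤ × ℤ | p.1 * (p.1 + 1) / 2 + 2 * (p.2 * (p.2 + 1) / 2) = (n : ℤ)}.ncard := by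
  set S := {p : ℤ × ℤ | p.1 ^ 2 + 2 * p.2 ^ 2 = (8 * n + 3 : ℤ)} with hS
  set T := {p : ℤ × ℤ | p.1 * (p.1 + 1) / 2 + 2 * (p.2 * (p.2 + 1) / 2) = (n : ℤ)} with hT
  have hodd : ∀ p ∈ S, ∃ a b : ℤ, p.1 = 2 * a + 1 ∧ p.2 = 2 * b + 1 := by
    rintro ⟨x, y⟩ hp
    simp only [hS, Set.mem_setOf_eq] at hp
    rcases Int.even_or_odd x with ⟨a, ha⟩ | ⟨a, ha⟩
    · exfalso
      have h2 : ∃ m : ℤ, 2 * m = 8 * (n : ℤ) + 3 :=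
        ⟨2 * a ^ 2 + y ^ 2, by rw [ha] at hp; linear_combination hp⟩
      obtain ⟨m, hm⟩ := h2
      omega
    · rcases Int.even_or_odd y with ⟨b, hb⟩ | ⟨b, hb⟩
      · exfalso
        have h4 : ∃ m : ℤ, 4 * m = 8 * (n : ℤ) + 2 :=
          ⟨a ^ 2 + a + 2 * b ^ 2, by rw [ha, hb] at hp; linear_combination hp⟩
        obtain ⟨m, hm⟩ := h4
        omega
      · exact ⟨a, b, by omega, by omega⟩
  have himg : (fun p : ℤ × ℤ => ((p.1 - 1) / 2, (p.2 - 1) / 2)) '' S = T := by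
    ext ⟨a, b⟩
    constructor
    · rintro ⟨⟨x, y⟩, hp, heq⟩
      obtain ⟨a', b', hx, hy⟩ := hodd _ hp
      simp only [Prod.mk.injEq] at heq
      obtain ⟨h1, h2⟩ := heq
      have ha : a = a' := by omega
      have hb : b = b' := by omega
      subst ha hb
      simp only [hS, Set.mem_setOf_eq] at hp
      simp only [hT, Set.mem_setOf_eq]
      have hu2 : a * (a + 1) % 2 = 0 := Int.even_iff.mp (Int.even_mul_succ_self a)
      have hv2 : b * (b + 1) % 2 = 0 := Int.even_iff.mp (Int.even_mul_succ_self b)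
      have h4 : 4 * (a * (a + 1)) + 8 * (b * (b + 1)) = 8 * (n : ℤ) := by
        have hx' : x = 2 * a + 1 := hx
        have hy' : y = 2 * b + 1 := hy
        rw [hx', hy'] at hp; linear_combination hp
      omega
    · intro hab
      simp only [hT, Set.mem_setOf_eq] at hab
      refine ⟨(2 * a + 1, 2 * b + 1), ?_, ?_⟩
      · simp only [hS, Set.mem_setOf_eq]
        have hu2 : a * (a + 1) % 2 = 0 := Int.even_iff.mp (Int.even_mul_succ_self a)
        have hv2 : b * (b + 1) % 2 = 0 := Int.even_iff.mp (Int.even_mul_succ_self b)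
        have key : a * (a + 1) + 2 * (b * (b + 1)) = 2 * (n : ℤ) := by omega
        linear_combination 4 * key
      · simp only [Prod.mk.injEq]
        constructor <;> omega
  have hinj : Set.InjOn (fun p : ℤ × ℤ => ((p.1 - 1) / 2, (p.2 - 1) / 2)) S := by
    rintro ⟨x, y⟩ hp ⟨x', y'⟩ hq h
    obtain ⟨a, b, hx, hy⟩ := hodd _ hp
    obtain ⟨a', b', hx', hy'⟩ := hodd _ hq
    simp only [Prod.mk.injEq] at h ⊢
    obtain ⟨h1, h2⟩ := h
    constructor <;> omega
  rw [← himg, Set.ncard_image_of_injOn hinj]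
end

section
/- For every natural number n, S_{1,2}(4n+2) = M_{1-4}(n), where S_{1,2}(m) counts integer pairs (x,y) with x² + 2y² = m, and M_{1-4}(n) counts integer pairs (x,y) with x² + 4t_y = n, where t_y = y(y+1)/2. -/
theorem stmt_9 (n : ℕ) :
    {p : ℤ × ℤ | p.1 ^ 2 + 2 * p.2 ^ 2 = (4 * n + 2 : ℤ)}.ncard =
      {p : ℤ × ℤ | p.1 ^ 2 + 4 * (p.2 * (p.2 + 1) / 2) = (n : ℤ)}.ncard := by
  have hinj : Function.Injective (fun p : ℤ × ℤ => (2 * p.1, 2 * p.2 + 1)) := by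
    rintro ⟨a, b⟩ ⟨c, d⟩ h
    simp only [Prod.mk.injEq] at h
    exact Prod.ext (by omega) (by omega)
  have hdiv : ∀ b : ℤ, 4 * (b * (b + 1) / 2) = 2 * (b * (b + 1)) := by
    intro b
    obtain ⟨c, hc⟩ := Int.even_mul_succ_self b
    rw [hc]
    omega
  have himg : {p : ℤ × ℤ | p.1 ^ 2 + 2 * p.2 ^ 2 = (4 * n + 2 : ℤ)} =
      (fun p : ℤ × ℤ => (2 * p.1, 2 * p.2 + 1)) ''
        {p : ℤ × ℤ | p.1 ^ 2 + 4 * (p.2 * (p.2 + 1) / 2) = (n : ℤ)} := by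
    ext ⟨x, y⟩
    simp only [Set.mem_image, Set.mem_setOf_eq, Prod.mk.injEq, Prod.exists]
    constructor
    · intro h
      obtain ⟨a, ha⟩ | ⟨a, ha⟩ := Int.even_or_odd x
      · subst ha
        obtain ⟨b, hb⟩ | ⟨b, hb⟩ := Int.even_or_odd y
        · exfalso
          subst hb
          have h1 : (a + a) ^ 2 = 4 * a ^ 2 := by ring
          have h2 : (b + b) ^ 2 = 4 * b ^ 2 := by ring
          rw [h1, h2] at h
          omega
        · refine ⟨a, b, ?_, by ring, by omega⟩
          rw [hdiv]
          subst hb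
          have h1 : (a + a) ^ 2 = 4 * a ^ 2 := by ring
          have h2 : (2 * b + 1) ^ 2 = 4 * (b * (b + 1)) + 1 := by ring
          rw [h1, h2] at h
          omega
      · exfalso
        subst ha
        have h1 : (2 * a + 1) ^ 2 = 4 * (a * (a + 1)) + 1 := by ring
        rw [h1] at h
        have h2 : y ^ 2 = y * y := sq y
        obtain ⟨b, hb⟩ | ⟨b, hb⟩ := Int.even_or_odd y
        · have : y * y = 4 * (b * b) := by rw [hb]; ring
          omega
        · have : y * y = 4 * (b * b + b) + 1 := by rw [hb]; ring
          omega
    · rintro ⟨a, b, hab, hx, hy⟩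
      rw [hdiv] at hab
      subst hx; subst hy
      nlinarith [hab]
  rw [himg, Set.ncard_image_of_injective _ hinj]
end

section
/- For every complex number x with |x| < 1, (Σ_{n∈ℤ} x^{n²})² = (Σ_{n∈ℤ} x^{2n²})² + x·(Σ_{n∈ℤ} x^{4·n(n+1)/2})²; equivalently, the generating-function identity Σ_{n≥0} S₂(n)x^n = Σ_{n≥0} S₂(n)x^{2n} + Σ_{n≥0} T₂(n)x^{4n+1} holds, where S₂(n) = #{(x,y)∈ℤ² : x²+y²=n} and T₂(n) = #{(x,y)∈ℤ² : x(x+1)/2 + y(y+1)/2 = n}. -/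
/-!
Squaring the theta series turns its left side into `∑ x ^ (a² + b²)` over `(a, b) ∈ ℤ²`. Split
the lattice points by the parity of `a + b`: the even ones are exactly `(m + n, m - n)`, with
`a² + b² = 2m² + 2n²`, and the odd ones exactly `(m + n + 1, m - n)`, with
`a² + b² = 1 + 2m(m + 1) + 2n(n + 1)`. The two halves factor into the two squares on the right.
-/

noncomputable def Int.sumDiffEquiv : (ℤ × ℤ) ⊕ (ℤ × ℤ) ≃ ℤ × ℤ :=
  Equiv.ofBijective
    (Sum.elim (fun q => (q.1 + q.2, q.1 - q.2)) (fun q => (q.1 + q.2 + 1, q.1 - q.2))) <| by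
    refine ⟨?_, fun p => ?_⟩
    · rintro (⟨a, b⟩ | ⟨a, b⟩) (⟨c, d⟩ | ⟨c, d⟩) h <;>
        simp only [Sum.elim_inl, Sum.elim_inr, Prod.mk.injEq, Sum.inl.injEq, Sum.inr.injEq,
          reduceCtorEq] at h ⊢ <;> omega
    · obtain ⟨k, hk | hk⟩ := Int.even_or_odd' (p.1 + p.2)
      · exact ⟨.inl (k, p.1 - k), by simp [Prod.ext_iff]; omega⟩
      · exact ⟨.inr (k, p.1 - k - 1), by simp [Prod.ext_iff]; omega⟩

lemma tsum_int_prod_eq_even_add_odd {α : Type*} [AddCommGroup α] [UniformSpace α]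
    [IsUniformAddGroup α] [CompleteSpace α] [T2Space α] {f : ℤ × ℤ → α} (hf : Summable f) :
    ∑' p, f p = ∑' q : ℤ × ℤ, f (q.1 + q.2, q.1 - q.2) +
      ∑' q : ℤ × ℤ, f (q.1 + q.2 + 1, q.1 - q.2) := by
  have hfe := Int.sumDiffEquiv.summable_iff.2 hf
  rw [← Int.sumDiffEquiv.tsum_eq]
  exact Summable.tsum_sum (f := f ∘ Int.sumDiffEquiv) (hfe.comp_injective Sum.inl_injective)
    (hfe.comp_injective Sum.inr_injective)

lemma tsum_zero_zpow {𝕜 : Type*} [DivisionRing 𝕜] [TopologicalSpace 𝕜] {e : ℤ → ℤ}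
    (he : ∀ n, e n = 0 ↔ n = 0) : ∑' n, (0 : 𝕜) ^ e n = 1 := by
  simp_rw [zero_zpow_eq, he, tsum_ite_eq]

section NormedDivisionRing

variable {𝕜 : Type*} [NormedDivisionRing 𝕜] {x : 𝕜}

lemma summable_norm_zpow_of_abs_sub_one_le (hx0 : x ≠ 0) (hx : ‖x‖ < 1) {e : ℤ → ℤ}
    (he : ∀ n, |n| - 1 ≤ e n) : Summable fun n => ‖x ^ e n‖ := by
  have hpos : 0 < ‖x‖ := norm_pos_iff.2 hx0
  have hgeom : Summable fun n : ℕ => ‖x‖ ^ n := summable_geometric_of_lt_one hpos.le hx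
  have habs : Summable fun n : ℤ => ‖x‖ ^ |n| :=
    .of_nat_of_neg (by simpa using hgeom) (by simpa using hgeom)
  refine (habs.mul_right ‖x‖⁻¹).of_nonneg_of_le (fun n => norm_nonneg _) fun n => ?_
  rw [norm_zpow, ← zpow_sub_one₀ hpos.ne']
  exact zpow_le_zpow_right_of_le_one₀ hpos hx.le (he n)

lemma hasSum_zpow_add [CompleteSpace 𝕜] (hx0 : x ≠ 0) {e : ℤ → ℤ}
    (he : Summable fun n => ‖x ^ e n‖) :
    HasSum (fun p : ℤ × ℤ => x ^ (e p.1 + e p.2)) ((∑' n, x ^ e n) ^ 2) := by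
  simp_rw [sq, zpow_add₀ hx0, tsum_mul_tsum_of_summable_norm he he]
  exact (summable_mul_of_summable_norm he he).hasSum

end NormedDivisionRing

theorem stmt_11 (x : ℂ) (hx : ‖x‖ < 1) :
    (∑' n : ℤ, x ^ (n ^ 2)) ^ 2 =
      (∑' n : ℤ, x ^ (2 * n ^ 2)) ^ 2 + x * (∑' n : ℤ, x ^ (2 * n * (n + 1))) ^ 2 := by
  rcases eq_or_ne x 0 with rfl | hx0
  · rw [tsum_zero_zpow (by simp), tsum_zero_zpow (by simp)]
    ring
  have hsq := hasSum_zpow_add hx0 <| summable_norm_zpow_of_abs_sub_one_le hx0 hx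
    (e := fun n => n ^ 2) fun n => by cases abs_cases n <;> nlinarith
  have hsq2 := hasSum_zpow_add hx0 <| summable_norm_zpow_of_abs_sub_one_le hx0 hx
    (e := fun n => 2 * n ^ 2) fun n => by cases abs_cases n <;> nlinarith
  have htri := hasSum_zpow_add hx0 <| summable_norm_zpow_of_abs_sub_one_le hx0 hx
    (e := fun n => 2 * n * (n + 1)) fun n => by cases abs_cases n <;> nlinarith
  rw [← hsq.tsum_eq, ← hsq2.tsum_eq, ← htri.tsum_eq, ← tsum_mul_left,
    tsum_int_prod_eq_even_add_odd hsq.summable]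
  congr 1 <;> refine tsum_congr fun q => ?_
  · ring_nf
  · rw [← zpow_one_add₀ hx0]
    ring_nf
end
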